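/- arXiv:1407.0614 — 3 statements merged into one kernel-verified Lean document; each statement's English description precedes it below -/
import Mathlib

section
/- Let X be a uniquely geodesic metric space whose distance functions are strictly convex along nondegenerate geodesics (e.g., the geodesic metric of a simple polygon). Let A be a nonempty intersection of closed unit balls with centers q₁,…,qₘ, and let e be a geodesic segment with endpoints α and β such that d(α,qᵢ) ≤ 2 for all i. Then there is at most one point p in e \ {α} such that d(p,q) = 2 for q a farthest center from p; that is, if p₁, p₂ ∈ e both lie at distance exactly 2 from their respective farthest centers and neither equals α, then p₁ = p₂. -/
/-! Along the segment, `d(q, γ ·)` is strictly quasiconvex for each center `q`. If `γ s` is at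
distance `r` from its farthest center `q` and `0 < s < t`, then `d(q, γ 0) ≤ r` and
`d(q, γ t) ≤ r` would force `d(q, γ s) < r`; so `γ t` has a center farther than `r`. -/

theorem dist_lt_of_strict_convex_along {X : Type*} [MetricSpace X] {γ : ℝ → X} {L : ℝ}
    (hstrict : ∀ (a : X) (s t u : ℝ), 0 ≤ s → s < t → t < u → u ≤ L →
      dist a (γ t) < max (dist a (γ s)) (dist a (γ u)))
    {a : X} {r s t : ℝ} (hs : 0 < s) (hst : s < t) (ht : t ≤ L)
    (h₀ : dist a (γ 0) ≤ r) (hₜ : dist a (γ t) ≤ r) :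
    dist a (γ s) < r :=
  (hstrict a 0 s t le_rfl hs hst ht).trans_le (max_le h₀ hₜ)

theorem le_of_dist_farthest_eq {X : Type*} [MetricSpace X] {γ : ℝ → X} {L : ℝ}
    (hstrict : ∀ (a : X) (s t u : ℝ), 0 ≤ s → s < t → t < u → u ≤ L →
      dist a (γ t) < max (dist a (γ s)) (dist a (γ u)))
    {Q : Finset X} {r : ℝ} (hα : ∀ i ∈ Q, dist (γ 0) i ≤ r)
    {s t : ℝ} (hs : 0 < s) (ht : t ≤ L) {a : X} (ha : a ∈ Q) (hsa : dist (γ s) a = r)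
    (htQ : ∀ i ∈ Q, dist (γ t) i ≤ r) :
    t ≤ s := by
  by_contra! hst
  have hlt := dist_lt_of_strict_convex_along hstrict hs hst ht
    (dist_comm a (γ 0) ▸ hα a ha) (dist_comm a (γ t) ▸ htQ a ha)
  exact (dist_comm a (γ s) ▸ hlt).ne hsa

theorem at_most_one_point_at_distance_two_general
    {X : Type*} [MetricSpace X]
    (γ : ℝ → X) (L : ℝ)
    (hstrict : ∀ (a : X) (s t u : ℝ), 0 ≤ s → s < t → t < u → u ≤ L →
      dist a (γ t) < max (dist a (γ s)) (dist a (γ u)))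
    (Q : Finset X)
    (hα : ∀ i ∈ Q, dist (γ 0) i ≤ 2)
    (t₁ t₂ : ℝ) (ht₁ : t₁ ∈ Set.Ioc 0 L) (ht₂ : t₂ ∈ Set.Ioc 0 L)
    (q₁ q₂ : X) (hq₁Q : q₁ ∈ Q) (hq₂Q : q₂ ∈ Q)
    (hq₁far : ∀ i ∈ Q, dist (γ t₁) i ≤ dist (γ t₁) q₁)
    (hq₂far : ∀ i ∈ Q, dist (γ t₂) i ≤ dist (γ t₂) q₂)
    (h₁ : dist (γ t₁) q₁ = 2) (h₂ : dist (γ t₂) q₂ = 2) :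
    t₁ = t₂ :=
  le_antisymm
    (le_of_dist_farthest_eq hstrict hα ht₂.1 ht₁.2 hq₂Q h₂
      fun i hi => (hq₁far i hi).trans h₁.le)
    (le_of_dist_farthest_eq hstrict hα ht₁.1 ht₂.2 hq₁Q h₁
      fun i hi => (hq₂far i hi).trans h₂.le)

/-- On a geodesic segment `γ : [0,L] → X` with endpoint `α = γ 0` satisfying
`d(α, qᵢ) ≤ 2` for all centers, there is at most one point of the segment other than
`α` whose distance to its farthest center is exactly `2`: if `γ t₁` and `γ t₂` both
are at distance exactly `2` from their respective farthest centers and `t₁, t₂ ∈ (0,L]`,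
then `t₁ = t₂`. -/
theorem at_most_one_point_at_distance_two
    {X : Type*} [MetricSpace X]
    (γ : ℝ → X) (L : ℝ) (hL : 0 < L)
    (hgeo : ∀ s ∈ Set.Icc (0:ℝ) L, ∀ t ∈ Set.Icc (0:ℝ) L, dist (γ s) (γ t) = |s - t|)
    (hstrict : ∀ (a : X) (s t u : ℝ), 0 ≤ s → s < t → t < u → u ≤ L →
      dist a (γ t) < max (dist a (γ s)) (dist a (γ u)))
    (Q : Finset X)
    (hα : ∀ i ∈ Q, dist (γ 0) i ≤ 2)
    (t₁ t₂ : ℝ) (ht₁ : t₁ ∈ Set.Ioc 0 L) (ht₂ : t₂ ∈ Set.Ioc 0 L)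
    (q₁ q₂ : X) (hq₁Q : q₁ ∈ Q) (hq₂Q : q₂ ∈ Q)
    (hq₁far : ∀ i ∈ Q, dist (γ t₁) i ≤ dist (γ t₁) q₁)
    (hq₂far : ∀ i ∈ Q, dist (γ t₂) i ≤ dist (γ t₂) q₂)
    (h₁ : dist (γ t₁) q₁ = 2) (h₂ : dist (γ t₂) q₂ = 2) :
    t₁ = t₂ :=
  at_most_one_point_at_distance_two_general γ L hstrict Q hα t₁ t₂ ht₁ ht₂ q₁ q₂ hq₁Q hq₂Q hq₁far
    hq₂far h₁ h₂
end

section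
/- Let i be a point in a uniquely geodesic metric space with strictly convex distance functions, let e be a geodesic segment with endpoint v such that d(i,v) ≤ 1. Then there are at most two points on e at distance exactly 1 from i, and if there are two such points, one of them is v. -/
theorem eq_of_apply_eq_of_apply_zero_le {f : ℝ → ℝ} {L c : ℝ}
    (hstrict : ∀ s t u : ℝ, 0 ≤ s → s < t → t < u → u ≤ L → f t < max (f s) (f u))
    (h0 : f 0 ≤ c) {t₁ t₂ : ℝ} (ht₁ : t₁ ∈ Set.Ioc 0 L) (ht₂ : t₂ ∈ Set.Ioc 0 L)
    (h₁ : f t₁ = c) (h₂ : f t₂ = c) : t₁ = t₂ := by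
  have key : ∀ {a b : ℝ}, a ∈ Set.Ioc 0 L → b ∈ Set.Ioc 0 L → f a = c → f b = c → ¬ a < b :=
    fun ha hb hfa hfb hab => by
      have := hstrict 0 _ _ le_rfl ha.1 hab hb.2
      rw [hfa, hfb, max_eq_right h0] at this
      exact lt_irrefl c this
  rcases lt_trichotomy t₁ t₂ with hlt | heq | hgt
  · exact absurd hlt (key ht₁ ht₂ h₁ h₂)
  · exact heq
  · exact absurd hgt (key ht₂ ht₁ h₂ h₁)

theorem at_most_two_points_at_distance_one_general
    {X : Type*} [MetricSpace X]
    (γ : ℝ → X) (L : ℝ) (i : X)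
    (hstrict : ∀ (a : X) (s t u : ℝ), 0 ≤ s → s < t → t < u → u ≤ L →
      dist a (γ t) < max (dist a (γ s)) (dist a (γ u)))
    (hv : dist i (γ 0) ≤ 1)
    (t₁ t₂ : ℝ) (ht₁ : t₁ ∈ Set.Icc 0 L) (ht₂ : t₂ ∈ Set.Icc 0 L)
    (hne : t₁ ≠ t₂)
    (h₁ : dist i (γ t₁) = 1) (h₂ : dist i (γ t₂) = 1) :
    t₁ = 0 ∨ t₂ = 0 := by
  by_contra! h
  have hpos₁ : t₁ ∈ Set.Ioc 0 L := ⟨ht₁.1.lt_of_ne' h.1, ht₁.2⟩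
  have hpos₂ : t₂ ∈ Set.Ioc 0 L := ⟨ht₂.1.lt_of_ne' h.2, ht₂.2⟩
  exact hne (eq_of_apply_eq_of_apply_zero_le (f := fun t => dist i (γ t)) (hstrict i) hv
    hpos₁ hpos₂ h₁ h₂)

/-- For a point `i` with `d(i,v) ≤ 1` and a geodesic segment `γ : [0,L] → X` with
endpoint `v = γ 0`, there are at most two points of the segment at distance exactly `1`
from `i`, and if there are two, one of them is `v`. -/
theorem at_most_two_points_at_distance_one
    {X : Type*} [MetricSpace X]
    (γ : ℝ → X) (L : ℝ) (hL : 0 < L) (i : X)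
    (hgeo : ∀ s ∈ Set.Icc (0:ℝ) L, ∀ t ∈ Set.Icc (0:ℝ) L, dist (γ s) (γ t) = |s - t|)
    (hstrict : ∀ (a : X) (s t u : ℝ), 0 ≤ s → s < t → t < u → u ≤ L →
      dist a (γ t) < max (dist a (γ s)) (dist a (γ u)))
    (hv : dist i (γ 0) ≤ 1)
    (t₁ t₂ : ℝ) (ht₁ : t₁ ∈ Set.Icc 0 L) (ht₂ : t₂ ∈ Set.Icc 0 L)
    (hne : t₁ ≠ t₂)
    (h₁ : dist i (γ t₁) = 1) (h₂ : dist i (γ t₂) = 1) :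
    t₁ = 0 ∨ t₂ = 0 :=
  at_most_two_points_at_distance_one_general γ L i hstrict hv t₁ t₂ ht₁ ht₂ hne h₁ h₂
end

section
/- Let γ be a crossing-free coloring of a circle (or cyclic sequence) using κ > 1 colors, and let Π_γ be the set of blocks (maximal monochromatic arcs) induced by γ. Then |Π_γ| ≤ 2(κ − 1). -/
/-!
Let `a` be the first letter of an `abab`-free word. If `a` recurs, cut the word `a X a Y` at
its second `a`: the cyclic words `a X` and `a Y` share no letter but `a` (a common `b` would
give `a b a b`), and the number of cyclic changes is additive over the cut. If `a` does not
recur, deleting it removes exactly two cyclic changes. Induction on the length.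
-/

namespace List

variable {α : Type*}

def CrossingFree (l : List α) : Prop := ∀ a b, a ≠ b → ¬ [a, b, a, b] <+ l

theorem CrossingFree.sublist {l l' : List α} (h : CrossingFree l') (hl : l <+ l') :
    CrossingFree l :=
  fun a b hab hs => h a b hab (hs.trans hl)

theorem CrossingFree.eq_of_mem_of_mem {a b : α} {l₁ l₂ : List α}
    (h : CrossingFree (a :: l₁ ++ a :: l₂)) (h₁ : b ∈ l₁) (h₂ : b ∈ l₂) : b = a := by
  by_contra hba
  exact h a b (Ne.symm hba) <|
    ((singleton_sublist.2 h₁).cons_cons a).append ((singleton_sublist.2 h₂).cons_cons a)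

theorem crossingFree_ofFn {n : ℕ} (γ : Fin n → α)
    (hcf : ∀ a b c d : Fin n, a < b → b < c → c < d → γ a = γ c → γ b = γ d → γ a = γ b) :
    CrossingFree (ofFn γ) := by
  intro x y hxy hs
  obtain ⟨f, hf⟩ := sublist_iff_exists_fin_orderEmbedding_get_eq.1 hs
  let e (i : Fin 4) : Fin n := Fin.cast length_ofFn (f i)
  have he : ∀ i j, i < j → e i < e j := fun i j hij => f.lt_iff_lt.2 hij
  have hv : ∀ i, [x, y, x, y].get i = γ (e i) := fun i => (hf i).trans (get_ofFn γ _)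
  exact hxy <| by
    simpa [← hv] using hcf (e 0) (e 1) (e 2) (e 3) (he _ _ (by decide)) (he _ _ (by decide))
      (he _ _ (by decide)) (by simp [← hv]) (by simp [← hv])

variable [DecidableEq α]

def adjChanges : List α → ℕ
  | a :: b :: l => (if a = b then 0 else 1) + adjChanges (b :: l)
  | _ => 0

/-- The number of blocks of the cyclic word `l`, provided `l` uses at least two letters. -/
def cyclicAdjChanges (l : List α) : ℕ := adjChanges (l ++ l.take 1)

theorem adjChanges_append_cons (l₁ l₂ : List α) (a : α) :
    adjChanges (l₁ ++ a :: l₂) = adjChanges (l₁ ++ [a]) + adjChanges (a :: l₂) := by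
  induction l₁ with
  | nil => simp [adjChanges]
  | cons x t ih =>
    cases t with
    | nil => simp [adjChanges]
    | cons y t => simp only [cons_append, adjChanges] at ih ⊢; omega

theorem adjChanges_le_append (l l' : List α) : adjChanges l ≤ adjChanges (l ++ l') := by
  match l with
  | [] | [_] => simp [adjChanges]
  | a :: b :: t =>
    simp only [cons_append, adjChanges]
    have := adjChanges_le_append (b :: t) l'
    simp only [cons_append] at this
    omega

theorem adjChanges_append_singleton_of_not_mem {l : List α} {a : α} (hl : l ≠ [])
    (ha : a ∉ l) :
    adjChanges (l ++ [a]) = adjChanges l + 1 := by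
  match l with
  | [b] => simp_all [adjChanges, eq_comm]
  | b :: c :: t =>
    simp only [cons_append, adjChanges]
    have := adjChanges_append_singleton_of_not_mem (l := c :: t) (a := a) (by simp) (by simp_all)
    simp only [cons_append] at this
    omega

theorem cyclicAdjChanges_cons_of_not_mem {a : α} {m : List α} (hm : m ≠ []) (ha : a ∉ m) :
    cyclicAdjChanges (a :: m) = adjChanges m + 2 := by
  obtain ⟨b, t, rfl⟩ := exists_cons_of_ne_nil hm
  have hab : a ≠ b := fun h => ha (h ▸ mem_cons_self)
  have := adjChanges_append_singleton_of_not_mem hm ha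
  simp only [cyclicAdjChanges, take_succ_cons, take_zero, cons_append, adjChanges, if_neg hab]
    at this ⊢
  omega

theorem cyclicAdjChanges_cons_append_cons (a : α) (l₁ l₂ : List α) :
    cyclicAdjChanges (a :: l₁ ++ a :: l₂) =
      cyclicAdjChanges (a :: l₁) + cyclicAdjChanges (a :: l₂) := by
  simpa [cyclicAdjChanges] using adjChanges_append_cons (a :: l₁) (l₂ ++ [a]) a

theorem CrossingFree.cyclicAdjChanges_le : ∀ {l : List α}, CrossingFree l →
    cyclicAdjChanges l ≤ 2 * (l.toFinset.card - 1)
  | [], _ => by simp [cyclicAdjChanges, adjChanges]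
  | a :: m, h => by
    by_cases ha : a ∈ m
    · obtain ⟨l₁, l₂, rfl⟩ := append_of_mem ha
      rw [← cons_append] at h ⊢
      have h₁ := CrossingFree.cyclicAdjChanges_le (h.sublist (sublist_append_left _ _))
      have h₂ := CrossingFree.cyclicAdjChanges_le (h.sublist (sublist_append_right _ _))
      have hinter : (a :: l₁).toFinset ∩ (a :: l₂).toFinset ⊆ {a} := by
        intro b hb
        simp only [Finset.mem_inter, mem_toFinset, mem_cons, Finset.mem_singleton] at hb ⊢
        by_contra hba
        exact hba (h.eq_of_mem_of_mem (hb.1.resolve_left hba) (hb.2.resolve_left hba))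
      have hcard_inter := (Finset.card_le_card hinter).trans_eq (Finset.card_singleton a)
      have hunion := Finset.card_union_add_card_inter (a :: l₁).toFinset (a :: l₂).toFinset
      have hpos₁ : 0 < (a :: l₁).toFinset.card := by simp
      have hpos₂ : 0 < (a :: l₂).toFinset.card := by simp
      rw [cyclicAdjChanges_cons_append_cons, toFinset_append]
      omega
    · rcases eq_or_ne m [] with rfl | hm
      · simp [cyclicAdjChanges, adjChanges]
      have ih := CrossingFree.cyclicAdjChanges_le (h.sublist (sublist_cons_self a m))
      have hle := adjChanges_le_append m (m.take 1)
      have hpos : 0 < m.toFinset.card := by simpa [Finset.card_pos] using hm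
      rw [cyclicAdjChanges_cons_of_not_mem hm ha, toFinset_cons,
        Finset.card_insert_of_notMem (mt mem_toFinset.1 ha)]
      rw [cyclicAdjChanges] at ih
      omega
termination_by l => l.length

theorem adjChanges_ofFn {m : ℕ} (f : Fin (m + 1) → α) :
    adjChanges (ofFn f) = (Finset.univ.filter fun i : Fin m => f i.castSucc ≠ f i.succ).card := by
  induction m with
  | zero => simp [adjChanges]
  | succ m ih =>
    rw [ofFn_succ, ofFn_succ, adjChanges, ← ofFn_succ (f := fun i => f i.succ), ih,
      Fin.card_filter_univ_succ]
    split_ifs <;> simp_all [add_comm]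

open Fin.NatCast in
theorem cyclicAdjChanges_ofFn {n : ℕ} [NeZero n] (γ : Fin n → α) :
    cyclicAdjChanges (ofFn γ) = (Finset.univ.filter fun x : Fin n => γ x ≠ γ (x + 1)).card := by
  obtain ⟨m, rfl⟩ := Nat.exists_eq_succ_of_ne_zero (NeZero.ne n)
  have hg : ofFn γ ++ (ofFn γ).take 1 = ofFn fun i : Fin (m + 2) => γ (i.val : Fin (m + 1)) := by
    rw [ofFn_succ' (n := m + 1), concat_eq_append, ofFn_succ]
    simp [Fin.cast_val_eq_self]
  rw [cyclicAdjChanges, hg, adjChanges_ofFn]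
  congr! 3 with i
  all_goals simp [Fin.val_succ, Fin.cast_val_eq_self]

end List

theorem crossing_free_block_bound_general (n : ℕ) [NeZero n] (γ : Fin n → ℕ)
    (hcf : ∀ a b c d : Fin n, a < b → b < c → c < d →
      γ a = γ c → γ b = γ d → γ a = γ b) :
    (Finset.univ.filter (fun x : Fin n => γ x ≠ γ (x + 1))).card
      ≤ 2 * ((Finset.univ.image γ).card - 1) := by
  rw [← List.cyclicAdjChanges_ofFn, Fin.univ_image_def]
  exact (List.crossingFree_ofFn γ hcf).cyclicAdjChanges_le

/-- A crossing-free coloring of a cyclic word on `n` positions using `κ > 1` colors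
induces at most `2(κ − 1)` blocks.  Crossing-free means the pattern `i…j…i…j` with
`i ≠ j` does not occur; the number of blocks (maximal monochromatic cyclic runs) equals
the number of positions `x` with `γ x ≠ γ (x+1)` (cyclically) when more than one color
is used. -/
theorem crossing_free_block_bound (n : ℕ) [NeZero n] (γ : Fin n → ℕ)
    (hκ : 1 < (Finset.univ.image γ).card)
    (hcf : ∀ a b c d : Fin n, a < b → b < c → c < d →
      γ a = γ c → γ b = γ d → γ a = γ b) :
    (Finset.univ.filter (fun x : Fin n => γ x ≠ γ (x + 1))).card
      ≤ 2 * ((Finset.univ.image γ).card - 1) :=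
  crossing_free_block_bound_general n γ hcf
end
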